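/- arXiv:1608.06900 — 6 statements merged into one kernel-verified Lean document; each statement's English description precedes it below -/
import Mathlib

section
/- Let X be a Banach space, let P, Q : X → X be continuous linear projections, and set R := (P−Q)∘(P−Q), U' := Q∘P + (1−Q)∘(1−P), V' := P∘Q + (1−P)∘(1−Q). Suppose there exists a continuous linear map S : X → X commuting with P and with Q such that S∘S∘(1−R) = (1−R)∘S∘S = 1. Then the operators U := U'∘S and V := V'∘S satisfy: U maps the range of P into the range of Q, V maps the range of Q into the range of P, V∘U = U∘V = 1 (so V = U⁻¹), and P = V∘Q∘U, Q = U∘P∘V. -/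
lemma kato_key {A : Type*} [Ring A] (P Q S R U' V' : A)
    (hP : P*P = P) (hQ : Q*Q = Q)
    (hR : R = (P - Q)*(P - Q))
    (hU' : U' = Q*P + (1-Q)*(1-P)) (hV' : V' = P*Q + (1-P)*(1-Q))
    (hSP : S*P = P*S) (hSQ : S*Q = Q*S)
    (hS₁ : S*S*(1-R) = 1) (hS₂ : (1-R)*(S*S) = 1) :
    (V'*S)*(U'*S) = 1 ∧ (U'*S)*(V'*S) = 1 ∧
    (V'*S)*(Q*(U'*S)) = P ∧ (U'*S)*(P*(V'*S)) = Q ∧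
    (U'*S)*P = Q*((U'*S)*P) ∧ (V'*S)*Q = P*((V'*S)*Q) := by
  have hP' : ∀ x : A, P*(P*x) = P*x := fun x => by rw [← mul_assoc, hP]
  have hQ' : ∀ x : A, Q*(Q*x) = Q*x := fun x => by rw [← mul_assoc, hQ]
  have cP : Commute S P := hSP
  have cQ : Commute S Q := hSQ
  have cU' : Commute S U' := by
    rw [hU']; exact (cQ.mul_right cP).add_right
      (((Commute.one_right S).sub_right cQ).mul_right ((Commute.one_right S).sub_right cP))
  have cV' : Commute S V' := by
    rw [hV']; exact (cP.mul_right cQ).add_right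
      (((Commute.one_right S).sub_right cP).mul_right ((Commute.one_right S).sub_right cQ))
  have vu : V'*U' = 1 - R := by
    rw [hU', hV', hR]
    simp only [mul_add, add_mul, mul_sub, sub_mul, mul_one, one_mul, mul_assoc, hP, hQ, hP', hQ']
    abel
  have uv : U'*V' = 1 - R := by
    rw [hU', hV', hR]
    simp only [mul_add, add_mul, mul_sub, sub_mul, mul_one, one_mul, mul_assoc, hP, hQ, hP', hQ']
    abel
  have hUP : U'*P = Q*P := by
    rw [hU']
    simp only [mul_add, add_mul, mul_sub, sub_mul, mul_one, one_mul, mul_assoc, hP, hQ, hP', hQ']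
    abel
  have hVQ : V'*Q = P*Q := by
    rw [hV']
    simp only [mul_add, add_mul, mul_sub, sub_mul, mul_one, one_mul, mul_assoc, hP, hQ, hP', hQ']
    abel
  have hPR : P*(1-R) = P*Q*P := by
    rw [hR]
    simp only [mul_add, add_mul, mul_sub, sub_mul, mul_one, one_mul, mul_assoc, hP, hQ, hP', hQ']
    abel
  have hQR : Q*(1-R) = Q*P*Q := by
    rw [hR]
    simp only [mul_add, add_mul, mul_sub, sub_mul, mul_one, one_mul, mul_assoc, hP, hQ, hP', hQ']
    abel
  have hQU' : P*Q*U' = P*Q*P := by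
    rw [hU']
    simp only [mul_add, add_mul, mul_sub, sub_mul, mul_one, one_mul, mul_assoc, hP, hQ, hP', hQ']
    abel
  have hPV' : Q*P*V' = Q*P*Q := by
    rw [hV']
    simp only [mul_add, add_mul, mul_sub, sub_mul, mul_one, one_mul, mul_assoc, hP, hQ, hP', hQ']
    abel
  have sP : ∀ x : A, S*(P*x) = P*(S*x) := fun x => by rw [← mul_assoc, cP.eq, mul_assoc]
  have sQ : ∀ x : A, S*(Q*x) = Q*(S*x) := fun x => by rw [← mul_assoc, cQ.eq, mul_assoc]
  have sU : ∀ x : A, S*(U'*x) = U'*(S*x) := fun x => by rw [← mul_assoc, cU'.eq, mul_assoc]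
  have sV : ∀ x : A, S*(V'*x) = V'*(S*x) := fun x => by rw [← mul_assoc, cV'.eq, mul_assoc]
  have hUP2 : ∀ x : A, U'*(P*x) = Q*(P*x) := fun x => by rw [← mul_assoc, hUP, mul_assoc]
  have hVQ2 : ∀ x : A, V'*(Q*x) = P*(Q*x) := fun x => by rw [← mul_assoc, hVQ, mul_assoc]
  refine ⟨?_, ?_, ?_, ?_, ?_, ?_⟩
  · simp only [mul_assoc, sU]
    simp only [← mul_assoc]
    rw [vu, mul_assoc, hS₂]
  · simp only [mul_assoc, sV]
    simp only [← mul_assoc]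
    rw [uv, mul_assoc, hS₂]
  · simp only [mul_assoc, sQ, sU]
    simp only [← mul_assoc]
    rw [hVQ, hQU', ← hPR, mul_assoc (P*(1-R)), mul_assoc P, hS₂, mul_one]
  · simp only [mul_assoc, sP, sV]
    simp only [← mul_assoc]
    rw [hUP, hPV', ← hQR, mul_assoc (Q*(1-R)), mul_assoc Q, hS₂, mul_one]
  · simp only [mul_assoc, cP.eq, sP, hUP2, hQ']
  · simp only [mul_assoc, cQ.eq, sQ, hVQ2, hP']

/-- **Pairs of near projections (Kato).** Let `X` be a Banach space, `P, Q` continuous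
linear projections on `X`, `R := (P−Q)∘(P−Q)`, `U' := Q∘P + (1−Q)∘(1−P)`,
`V' := P∘Q + (1−P)∘(1−Q)`.  Suppose `S` is a continuous linear map commuting with `P`
and `Q` such that `S∘S∘(1−R) = (1−R)∘S∘S = 1`.  Then `U := U'∘S` maps `ran P` into
`ran Q`, `V := V'∘S` maps `ran Q` into `ran P`, `V∘U = U∘V = 1` (so `V = U⁻¹`), and
`P = V∘Q∘U`, `Q = U∘P∘V`. -/
theorem pairs_of_near_projections
    {X : Type*} [NormedAddCommGroup X] [NormedSpace ℂ X] [CompleteSpace X]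
    (P Q S : X →L[ℂ] X) (hP : P ∘L P = P) (hQ : Q ∘L Q = Q)
    (R U' V' U V : X →L[ℂ] X)
    (hR : R = (P - Q) ∘L (P - Q))
    (hU' : U' = Q ∘L P + (1 - Q) ∘L (1 - P))
    (hV' : V' = P ∘L Q + (1 - P) ∘L (1 - Q))
    (hSP : S ∘L P = P ∘L S) (hSQ : S ∘L Q = Q ∘L S)
    (hS₁ : (S ∘L S) ∘L (1 - R) = 1) (hS₂ : (1 - R) ∘L (S ∘L S) = 1)
    (hU : U = U' ∘L S) (hV : V = V' ∘L S) :
    Set.MapsTo U (Set.range P) (Set.range Q) ∧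
    Set.MapsTo V (Set.range Q) (Set.range P) ∧
    V ∘L U = 1 ∧ U ∘L V = 1 ∧
    P = V ∘L Q ∘L U ∧ Q = U ∘L P ∘L V := by
  simp only [← ContinuousLinearMap.mul_def] at *
  obtain ⟨c1, c2, c3, c4, c5, c6⟩ :=
    kato_key P Q S R U' V' hP hQ hR hU' hV' hSP hSQ hS₁ hS₂
  subst hU hV
  refine ⟨?_, ?_, c1, c2, c3.symm, c4.symm⟩
  · rintro x ⟨y, rfl⟩
    refine ⟨(U' * S * P) y, ?_⟩
    have := congrArg (fun T : X →L[ℂ] X => T y) c5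
    simpa using this.symm
  · rintro x ⟨y, rfl⟩
    refine ⟨(V' * S * Q) y, ?_⟩
    have := congrArg (fun T : X →L[ℂ] X => T y) c6
    simpa using this.symm
end

section
/- Let A be a unital complex Banach algebra and let R ∈ A with ‖R‖ < 1. Define coefficients c₀ := 1 and cₙ := ∏_{k=0}^{n−1} (2k+1)/(2k+2) for n ≥ 1. Then the series Σ_{n≥0} cₙ Rⁿ converges absolutely in A, and its sum S satisfies S·S·(1−R) = (1−R)·S·S = 1; moreover S commutes with every element a ∈ A that commutes with R. -/
/-!
The coefficients are `cₙ = (-1)ⁿ · choose (-1/2) n`, so the Chu–Vandermonde identity for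
`-1/2 + -1/2 = -1` gives `∑_{i+j=n} cᵢ cⱼ = (-1)ⁿ · choose (-1) n = 1`. Hence the Cauchy square of
`∑ cₙ Rⁿ` is the geometric series `∑ Rⁿ = (1 - R)⁻¹`; absolute convergence follows by comparison
with that series, since `0 ≤ cₙ ≤ 1`.
-/

open Finset

theorem Ring.choose_neg_one {R : Type*} [Ring R] [BinomialRing R] (n : ℕ) :
    Ring.choose (-1 : R) n = (-1) ^ n := by
  rw [Ring.choose_neg, add_sub_cancel_left, Ring.choose_natCast, Nat.choose_self, Nat.cast_one,
    Units.smul_def, zsmul_one, Int.cast_negOnePow_natCast]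

theorem Ring.succ_mul_choose_succ {R : Type*} [Ring R] [BinomialRing R] (r : R) (n : ℕ) :
    (n + 1 : R) * Ring.choose r (n + 1) = Ring.choose r n * (r - n) := by
  have h := Ring.choose_smul_choose r (Nat.le_add_right n 1)
  rwa [Nat.choose_succ_self_right, Nat.add_sub_cancel_left, Ring.choose_one_right, nsmul_eq_mul,
    Nat.cast_succ] at h

section invSqrtCoeff

variable (K : Type*) [Field K]

def invSqrtCoeff (n : ℕ) : K := ∏ k ∈ range n, (2 * k + 1) / (2 * k + 2)

variable {K}

theorem invSqrtCoeff_succ (n : ℕ) :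
    invSqrtCoeff K (n + 1) = invSqrtCoeff K n * ((2 * n + 1) / (2 * n + 2)) :=
  prod_range_succ _ n

theorem Ring.choose_neg_half [CharZero K] (n : ℕ) :
    Ring.choose (-1 / 2 : K) n = (-1) ^ n * invSqrtCoeff K n := by
  induction n with
  | zero => simp [invSqrtCoeff]
  | succ n ih =>
    have hn : (n + 1 : K) ≠ 0 := n.cast_add_one_ne_zero
    apply mul_left_cancel₀ hn
    rw [Ring.succ_mul_choose_succ, ih, invSqrtCoeff_succ]
    field_simp
    ring

theorem sum_antidiagonal_invSqrtCoeff_mul [CharZero K] (n : ℕ) :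
    ∑ ij ∈ antidiagonal n, invSqrtCoeff K ij.1 * invSqrtCoeff K ij.2 = 1 := by
  have vandermonde := Ring.add_choose_eq n (Commute.refl (-1 / 2 : K))
  have signs : ∑ ij ∈ antidiagonal n, Ring.choose (-1 / 2 : K) ij.1 * Ring.choose (-1 / 2 : K) ij.2
      = (-1) ^ n * ∑ ij ∈ antidiagonal n, invSqrtCoeff K ij.1 * invSqrtCoeff K ij.2 := by
    rw [mul_sum]
    refine sum_congr rfl fun ij hij => ?_
    rw [← mem_antidiagonal.mp hij, Ring.choose_neg_half, Ring.choose_neg_half, pow_add]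
    ring
  rw [add_halves, Ring.choose_neg_one, signs] at vandermonde
  exact (mul_eq_left₀ (pow_ne_zero n (neg_ne_zero.mpr one_ne_zero))).mp vandermonde.symm

variable [LinearOrder K] [IsStrictOrderedRing K]

theorem invSqrtCoeff_nonneg (n : ℕ) : 0 ≤ invSqrtCoeff K n :=
  prod_nonneg fun k _ => by positivity

theorem invSqrtCoeff_le_one (n : ℕ) : invSqrtCoeff K n ≤ 1 :=
  prod_le_one (fun k _ => by positivity) fun k _ => by
    rw [div_le_one (by positivity)]
    linarith

end invSqrtCoeff

section PowerSeries

variable {𝕜 A : Type*} [NormedField 𝕜] [NormedRing A] [NormedAlgebra 𝕜 A]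

theorem summable_norm_smul_pow_of_norm_le_one {a : ℕ → 𝕜} (ha : ∀ n, ‖a n‖ ≤ 1) {x : A}
    (hx : ‖x‖ < 1) : Summable fun n => ‖a n • x ^ n‖ :=
  (summable_norm_geometric_of_norm_lt_one hx).of_nonneg_of_le (fun _ => norm_nonneg _) fun n =>
    (norm_smul_le _ _).trans (mul_le_of_le_one_left (norm_nonneg _) (ha n))

theorem tsum_smul_pow_mul_tsum_smul_pow [CompleteSpace A] {a b : ℕ → 𝕜} {x : A}
    (ha : Summable fun n => ‖a n • x ^ n‖) (hb : Summable fun n => ‖b n • x ^ n‖) :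
    (∑' n, a n • x ^ n) * (∑' n, b n • x ^ n)
      = ∑' n, (∑ ij ∈ antidiagonal n, a ij.1 * b ij.2) • x ^ n := by
  rw [tsum_mul_tsum_eq_tsum_sum_antidiagonal_of_summable_norm ha hb]
  refine tsum_congr fun n => ?_
  rw [sum_smul]
  refine sum_congr rfl fun ij hij => ?_
  rw [smul_mul_smul_comm, ← pow_add, mem_antidiagonal.mp hij]

end PowerSeries

/-- **Binomial series for `(1−R)^{−1/2}` in a Banach algebra.**  Let `A` be a unital
complex Banach algebra and `R ∈ A` with `‖R‖ < 1`.  With `cₙ := ∏_{k=0}^{n−1}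
(2k+1)/(2k+2)` (so `c₀ = 1`), the series `Σ cₙ Rⁿ` converges absolutely, its sum `S`
satisfies `S·S·(1−R) = (1−R)·S·S = 1`, and `S` commutes with every `a` commuting
with `R`. -/
theorem binomial_series_inverse_sqrt
    {A : Type*} [NormedRing A] [NormedAlgebra ℂ A] [CompleteSpace A]
    (R : A) (hR : ‖R‖ < 1)
    (c : ℕ → ℝ)
    (hc : ∀ n, c n = ∏ k ∈ Finset.range n, ((2 * (k : ℝ) + 1) / (2 * (k : ℝ) + 2)))
    (S : A) (hS : S = ∑' n : ℕ, (c n : ℂ) • R ^ n) :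
    Summable (fun n : ℕ => ‖(c n : ℂ) • R ^ n‖) ∧
    S * S * (1 - R) = 1 ∧ (1 - R) * (S * S) = 1 ∧
    ∀ a : A, a * R = R * a → a * S = S * a := by
  obtain rfl : c = invSqrtCoeff ℝ := funext hc
  subst hS
  have hsum : Summable fun n => ‖(invSqrtCoeff ℝ n : ℂ) • R ^ n‖ :=
    summable_norm_smul_pow_of_norm_le_one (fun n => by
      rw [Complex.norm_real, Real.norm_of_nonneg (invSqrtCoeff_nonneg n)]
      exact invSqrtCoeff_le_one n) hR
  have hsq : (∑' n, (invSqrtCoeff ℝ n : ℂ) • R ^ n) * (∑' n, (invSqrtCoeff ℝ n : ℂ) • R ^ n)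
      = ∑' n, R ^ n := by
    rw [tsum_smul_pow_mul_tsum_smul_pow hsum hsum]
    refine tsum_congr fun n => ?_
    have hconv : ∑ ij ∈ antidiagonal n, (invSqrtCoeff ℝ ij.1 : ℂ) * invSqrtCoeff ℝ ij.2 = 1 := by
      exact_mod_cast sum_antidiagonal_invSqrtCoeff_mul n
    rw [hconv, one_smul]
  refine ⟨hsum, ?_, ?_, fun a ha => ?_⟩
  · rw [hsq, geom_series_mul_neg R hR]
  · rw [hsq, mul_neg_geom_series R hR]
  · exact Commute.tsum_right a fun n => ((Commute.pow_right ha n).smul_right _)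
end

section
/- Let 𝒱 be a unital C*-algebra, let τ : ℝ → (𝒱 ≃⋆-alg 𝒱) be a one-parameter group of *-automorphisms (τ_{s+t} = τ_s ∘ τ_t, τ_0 = id) such that (t, a) ↦ τ_t(a) is continuous, and let W : ℝ → 𝒱 be continuous. Fix s ≤ t and set M := sup_{u∈[s,t]} ‖W(u)‖. For k ≥ 1 define I_k := i^k ∫_s^t ds₁ ∫_s^{s₁} ds₂ ⋯ ∫_s^{s_{k−1}} ds_k τ_{s_k}(W(s_k))⋯τ_{s₁}(W(s₁)) (the time-ordered iterated Bochner integral over the simplex {s ≤ s_k ≤ ⋯ ≤ s₁ ≤ t}). Then ‖I_k‖ ≤ M^k (t−s)^k / k! for every k ≥ 1, the Dyson series 𝔙_{t,s} := 1 + Σ_{k≥1} I_k converges absolutely in 𝒱, and ‖𝔙_{t,s}‖ ≤ exp(M(t−s)). -/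
/-!
Writing `g u := τ_u(W(u))`, the terms satisfy `I_{k+1}(t) = ∫_s^t I_k(u) g(u) du` with `I_0 = 1`.
Since `τ_u` is a *-automorphism of a C*-algebra it is isometric, so `‖g‖ ≤ M` on `[s, t]`, and
induction gives `‖I_k(t)‖ ≤ M^k (t-s)^k / k!` because `∫_s^t (u-s)^k / k! du = (t-s)^{k+1}/(k+1)!`.
The factors `i^k` have norm one, so the series is dominated termwise by the exponential series
of `M (t - s)`, which also bounds the norm of the sum.
-/

open MeasureTheory intervalIntegral in
/-- The `k`-th time-ordered iterated integral of the Dyson series: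
`dysonTerm τ W s 0 t = 1` and
`dysonTerm τ W s (k+1) t = ∫_s^t (dysonTerm τ W s k u) · τ_u(W(u)) du`,
so that `dysonTerm τ W s k t
  = ∫_s^t ds₁ ∫_s^{s₁} ds₂ ⋯ ∫_s^{s_{k−1}} ds_k τ_{s_k}(W(s_k))⋯τ_{s₁}(W(s₁))`. -/
noncomputable def dysonTerm {𝒱 : Type*} [NormedRing 𝒱] [StarRing 𝒱]
    [NormedAlgebra ℂ 𝒱] [CompleteSpace 𝒱]
    (τ : ℝ → (𝒱 ≃⋆ₐ[ℂ] 𝒱)) (W : ℝ → 𝒱) (s : ℝ) : ℕ → ℝ → 𝒱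
  | 0, _ => 1
  | k + 1, t => ∫ u in s..t, dysonTerm τ W s k u * (τ u (W u))

open MeasureTheory Set intervalIntegral
open scoped Nat

theorem CStarRing.norm_one_le {E : Type*} [NormedRing E] [StarRing E] [CStarRing E] :
    ‖(1 : E)‖ ≤ 1 := by
  rcases subsingleton_or_nontrivial E with h | h
  · simp [Subsingleton.elim (1 : E) 0]
  · exact CStarRing.norm_one.le

theorem integral_pow_sub_div_factorial (s u : ℝ) (k : ℕ) :
    ∫ v in s..u, (v - s) ^ k / k ! = (u - s) ^ (k + 1) / (k + 1)! := by
  rw [intervalIntegral.integral_div, intervalIntegral.integral_comp_sub_right (· ^ k),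
    integral_pow, Nat.factorial_succ]
  push_cast
  field_simp
  ring

theorem Real.hasSum_pow_succ_div_factorial (x : ℝ) :
    HasSum (fun k : ℕ => x ^ (k + 1) / (k + 1)!) (Real.exp x - 1) := by
  have h := (hasSum_nat_add_iff' 1).2 (NormedSpace.expSeries_div_hasSum_exp x)
  simpa [← Real.exp_eq_exp_ℝ] using h

theorem norm_dysonTerm_le {𝒱 : Type*} [NormedRing 𝒱] [StarRing 𝒱] [NormedAlgebra ℂ 𝒱]
    [CompleteSpace 𝒱] (τ : ℝ → (𝒱 ≃⋆ₐ[ℂ] 𝒱)) (W : ℝ → 𝒱) (s : ℝ) (h1 : ‖(1 : 𝒱)‖ ≤ 1) {M : ℝ}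
    (k : ℕ) {t : ℝ} (hst : s ≤ t) (hM : ∀ u ∈ Icc s t, ‖τ u (W u)‖ ≤ M) :
    ‖dysonTerm τ W s k t‖ ≤ M ^ k * (t - s) ^ k / k ! := by
  induction k generalizing t with
  | zero => simpa [dysonTerm] using h1
  | succ k ih =>
    have hintegrand : ∀ v ∈ Ioc s t,
        ‖dysonTerm τ W s k v * τ v (W v)‖ ≤ M ^ (k + 1) * ((v - s) ^ k / k !) := by
      intro v hv
      have hv' : v ∈ Icc s t := Ioc_subset_Icc_self hv
      have hvs : 0 ≤ v - s := sub_nonneg.2 hv'.1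
      calc ‖dysonTerm τ W s k v * τ v (W v)‖ ≤ ‖dysonTerm τ W s k v‖ * ‖τ v (W v)‖ :=
            norm_mul_le _ _
        _ ≤ M ^ k * (v - s) ^ k / k ! * M :=
            mul_le_mul (ih hv'.1 fun u hu => hM u ⟨hu.1, hu.2.trans hv'.2⟩) (hM v hv')
              (norm_nonneg _) (by have := (norm_nonneg _).trans (hM v hv'); positivity)
        _ = M ^ (k + 1) * ((v - s) ^ k / k !) := by ring
    calc ‖dysonTerm τ W s (k + 1) t‖ ≤ ∫ v in s..t, M ^ (k + 1) * ((v - s) ^ k / k !) :=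
          norm_integral_le_of_norm_le hst (ae_of_all _ hintegrand)
            (Continuous.intervalIntegrable (by fun_prop) _ _)
      _ = M ^ (k + 1) * (t - s) ^ (k + 1) / (k + 1)! := by
          rw [intervalIntegral.integral_const_mul, integral_pow_sub_div_factorial, mul_div_assoc]

theorem dyson_series_bound_general
    {𝒱 : Type*} [NormedRing 𝒱] [StarRing 𝒱] [CStarRing 𝒱]
    [NormedAlgebra ℂ 𝒱] [CompleteSpace 𝒱] [StarModule ℂ 𝒱]
    (τ : ℝ → (𝒱 ≃⋆ₐ[ℂ] 𝒱))
    (W : ℝ → 𝒱) (hW : Continuous W)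
    (s t : ℝ) (hst : s ≤ t)
    (M : ℝ) (hM : M = sSup ((fun u => ‖W u‖) '' Set.Icc s t)) :
    (∀ k : ℕ, 1 ≤ k →
      ‖(Complex.I ^ k) • dysonTerm τ W s k t‖ ≤ M ^ k * (t - s) ^ k / (Nat.factorial k)) ∧
    Summable (fun k : ℕ => ‖(Complex.I ^ (k + 1)) • dysonTerm τ W s (k + 1) t‖) ∧
    ‖(1 : 𝒱) + ∑' k : ℕ, (Complex.I ^ (k + 1)) • dysonTerm τ W s (k + 1) t‖ ≤
      Real.exp (M * (t - s)) := by
  let : CStarAlgebra 𝒱 := {}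
  have hτW_le : ∀ u ∈ Icc s t, ‖τ u (W u)‖ ≤ M := fun u hu => by
    rw [StarAlgEquiv.norm_map, hM]
    exact le_csSup (isCompact_Icc.image (continuous_norm.comp hW)).bddAbove ⟨u, hu, rfl⟩
  have hterm (k : ℕ) : ‖(Complex.I ^ k) • dysonTerm τ W s k t‖ ≤ M ^ k * (t - s) ^ k / k ! := by
    rw [norm_smul, norm_pow, Complex.norm_I, one_pow, one_mul]
    exact norm_dysonTerm_le τ W s CStarRing.norm_one_le k hst hτW_le
  have hterm_succ (k : ℕ) : ‖(Complex.I ^ (k + 1)) • dysonTerm τ W s (k + 1) t‖ ≤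
      (M * (t - s)) ^ (k + 1) / (k + 1)! := mul_pow M (t - s) (k + 1) ▸ hterm (k + 1)
  have hexp := Real.hasSum_pow_succ_div_factorial (M * (t - s))
  refine ⟨fun k _ => hterm k,
    hexp.summable.of_nonneg_of_le (fun _ => norm_nonneg _) hterm_succ, ?_⟩
  calc _ ≤ ‖(1 : 𝒱)‖ + ‖∑' k : ℕ, (Complex.I ^ (k + 1)) • dysonTerm τ W s (k + 1) t‖ :=
        norm_add_le _ _
    _ ≤ 1 + (Real.exp (M * (t - s)) - 1) :=
        add_le_add CStarRing.norm_one_le (tsum_of_norm_bounded hexp hterm_succ)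
    _ = Real.exp (M * (t - s)) := add_sub_cancel _ _

/-- **Absolute convergence of the Dyson series.**  Let `𝒱` be a unital C*-algebra,
`τ` a strongly continuous one-parameter group of *-automorphisms of `𝒱`, and
`W : ℝ → 𝒱` continuous.  Fix `s ≤ t` and let `M := sup_{u∈[s,t]} ‖W(u)‖`.  Then the
`k`-th term `I_k := i^k ∫_s^t ds₁ ⋯ ∫_s^{s_{k−1}} ds_k τ_{s_k}(W(s_k))⋯τ_{s₁}(W(s₁))`
satisfies `‖I_k‖ ≤ M^k (t−s)^k / k!` for `k ≥ 1`, the Dyson series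
`𝔙_{t,s} = 1 + Σ_{k≥1} I_k` converges absolutely, and `‖𝔙_{t,s}‖ ≤ exp(M(t−s))`. -/
theorem dyson_series_bound
    {𝒱 : Type*} [NormedRing 𝒱] [StarRing 𝒱] [CStarRing 𝒱]
    [NormedAlgebra ℂ 𝒱] [CompleteSpace 𝒱] [StarModule ℂ 𝒱]
    (τ : ℝ → (𝒱 ≃⋆ₐ[ℂ] 𝒱))
    (hgroup : ∀ s t : ℝ, ∀ a : 𝒱, τ (s + t) a = τ s (τ t a))
    (hid : ∀ a : 𝒱, τ 0 a = a)
    (hcont : Continuous fun p : ℝ × 𝒱 => τ p.1 p.2)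
    (W : ℝ → 𝒱) (hW : Continuous W)
    (s t : ℝ) (hst : s ≤ t)
    (M : ℝ) (hM : M = sSup ((fun u => ‖W u‖) '' Set.Icc s t)) :
    (∀ k : ℕ, 1 ≤ k →
      ‖(Complex.I ^ k) • dysonTerm τ W s k t‖ ≤ M ^ k * (t - s) ^ k / (Nat.factorial k)) ∧
    Summable (fun k : ℕ => ‖(Complex.I ^ (k + 1)) • dysonTerm τ W s (k + 1) t‖) ∧
    ‖(1 : 𝒱) + ∑' k : ℕ, (Complex.I ^ (k + 1)) • dysonTerm τ W s (k + 1) t‖ ≤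
      Real.exp (M * (t - s)) :=
  dyson_series_bound_general τ W hW s t hst M hM
end

section
/- Let 𝒱 be a unital C*-algebra, let τ : ℝ → (𝒱 ≃⋆-alg 𝒱) be a one-parameter group of *-automorphisms (τ_{s+t} = τ_s ∘ τ_t, τ_0 = id) such that (t, a) ↦ τ_t(a) is continuous, and let W : ℝ → 𝒱 be continuous. Suppose W is periodic with period T > 0, i.e., W(u+T) = W(u) for all u ∈ ℝ. For s ≤ t let 𝔙_{t,s} := 1 + Σ_{k≥1} i^k ∫_s^t ds₁ ∫_s^{s₁} ds₂ ⋯ ∫_s^{s_{k−1}} ds_k τ_{s_k}(W(s_k))⋯τ_{s₁}(W(s₁)) be the (absolutely convergent) Dyson series. Then for every integer p and all s ≤ t one has τ_{−pT}(𝔙_{t+pT, s+pT}) = 𝔙_{t,s}. -/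
/-- Each Dyson term is continuous in its time variable. -/
theorem dysonTerm_continuous {𝒱 : Type*} [NormedRing 𝒱] [StarRing 𝒱]
    [NormedAlgebra ℂ 𝒱] [CompleteSpace 𝒱]
    (τ : ℝ → (𝒱 ≃⋆ₐ[ℂ] 𝒱)) (hcont : Continuous fun p : ℝ × 𝒱 => τ p.1 p.2)
    (W : ℝ → 𝒱) (hW : Continuous W) (s : ℝ) (k : ℕ) :
    Continuous (dysonTerm τ W s k) := by
  induction k with
  | zero => exact continuous_const
  | succ k ih =>
    have hτW : Continuous fun u => τ u (W u) :=
      hcont.comp (continuous_id.prodMk hW)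
    have h : Continuous fun u => dysonTerm τ W s k u * τ u (W u) := ih.mul hτW
    exact intervalIntegral.continuous_primitive
      (fun a b => h.intervalIntegrable a b) s

/-- Shift-covariance of the Dyson terms for a `c`-periodic perturbation. -/
theorem dysonTerm_shift {𝒱 : Type*} [NormedRing 𝒱] [StarRing 𝒱]
    [NormedAlgebra ℂ 𝒱] [CompleteSpace 𝒱]
    (τ : ℝ → (𝒱 ≃⋆ₐ[ℂ] 𝒱))
    (hgroup : ∀ s t : ℝ, ∀ a : 𝒱, τ (s + t) a = τ s (τ t a))
    (hcont : Continuous fun p : ℝ × 𝒱 => τ p.1 p.2)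
    (W : ℝ → 𝒱) (hW : Continuous W)
    (c : ℝ) (hWc : ∀ u : ℝ, W (u + c) = W u)
    (s : ℝ) (k : ℕ) (t : ℝ) :
    dysonTerm τ W (s + c) k (t + c) = τ c (dysonTerm τ W s k t) := by
  induction k generalizing t with
  | zero =>
    show (1 : 𝒱) = τ c 1
    rw [map_one]
  | succ k ih =>
    have hτc : Continuous fun a : 𝒱 => τ c a :=
      hcont.comp (continuous_const.prodMk continuous_id)
    let L : 𝒱 →L[ℂ] 𝒱 :=
      { toFun := τ c, map_add' := map_add _, map_smul' := map_smul _, cont := hτc }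
    have hτW : Continuous fun u => τ u (W u) :=
      hcont.comp (continuous_id.prodMk hW)
    have hint : Continuous fun u => dysonTerm τ W s k u * τ u (W u) :=
      (dysonTerm_continuous τ hcont W hW s k).mul hτW
    show (∫ u in (s + c)..(t + c), dysonTerm τ W (s + c) k u * τ u (W u))
        = τ c (∫ u in s..t, dysonTerm τ W s k u * τ u (W u))
    rw [← intervalIntegral.integral_comp_add_right
        (fun u => dysonTerm τ W (s + c) k u * τ u (W u)) c]
    have hL : τ c (∫ u in s..t, dysonTerm τ W s k u * τ u (W u))
        = ∫ u in s..t, τ c (dysonTerm τ W s k u * τ u (W u)) :=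
      (L.intervalIntegral_comp_comm (hint.intervalIntegrable s t)).symm
    rw [hL]
    refine intervalIntegral.integral_congr fun u _ => ?_
    show dysonTerm τ W (s + c) k (u + c) * τ (u + c) (W (u + c))
        = τ c (dysonTerm τ W s k u * τ u (W u))
    rw [ih u, hWc u, map_mul]
    congr 1
    rw [← hgroup c u, add_comm c u]

/-- **Periodicity of the Dyson series.**  Let `𝒱` be a unital C*-algebra, `τ` a
strongly continuous one-parameter group of *-automorphisms of `𝒱`, and `W : ℝ → 𝒱`
continuous and `T`-periodic with `T > 0`.  For `s ≤ t` let
`𝔙_{t,s} := 1 + Σ_{k≥1} i^k ∫_s^t ds₁ ⋯ ∫_s^{s_{k−1}} ds_k τ_{s_k}(W(s_k))⋯τ_{s₁}(W(s₁))`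
be the Dyson series.  Then `τ_{−pT}(𝔙_{t+pT, s+pT}) = 𝔙_{t,s}` for every integer `p`. -/
theorem dyson_series_periodicity
    {𝒱 : Type*} [NormedRing 𝒱] [StarRing 𝒱] [CStarRing 𝒱]
    [NormedAlgebra ℂ 𝒱] [CompleteSpace 𝒱] [StarModule ℂ 𝒱]
    (τ : ℝ → (𝒱 ≃⋆ₐ[ℂ] 𝒱))
    (hgroup : ∀ s t : ℝ, ∀ a : 𝒱, τ (s + t) a = τ s (τ t a))
    (hid : ∀ a : 𝒱, τ 0 a = a)
    (hcont : Continuous fun p : ℝ × 𝒱 => τ p.1 p.2)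
    (W : ℝ → 𝒱) (hW : Continuous W)
    (T : ℝ) (hT : 0 < T) (hper : ∀ u : ℝ, W (u + T) = W u)
    (p : ℤ) (s t : ℝ) (hst : s ≤ t) :
    τ (-(p * T))
        ((1 : 𝒱) + ∑' k : ℕ,
          (Complex.I ^ (k + 1)) • dysonTerm τ W (s + p * T) (k + 1) (t + p * T))
      = (1 : 𝒱) + ∑' k : ℕ, (Complex.I ^ (k + 1)) • dysonTerm τ W s (k + 1) t := by
  set c : ℝ := (p : ℝ) * T with hc
  have hWc : ∀ u : ℝ, W (u + c) = W u := (Function.Periodic.int_mul hper p)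
  -- the automorphism `τ (-c)` as a continuous linear equivalence
  have hτneg : Continuous fun a : 𝒱 => τ (-c) a :=
    hcont.comp (continuous_const.prodMk continuous_id)
  have hτpos : Continuous fun a : 𝒱 => τ c a :=
    hcont.comp (continuous_const.prodMk continuous_id)
  let E : 𝒱 ≃L[ℂ] 𝒱 :=
    { toFun := τ (-c)
      invFun := τ c
      map_add' := map_add _
      map_smul' := map_smul _
      left_inv := fun a => by
        show τ c (τ (-c) a) = a
        rw [← hgroup c (-c) a, add_neg_cancel, hid]
      right_inv := fun a => by
        show τ (-c) (τ c a) = a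
        rw [← hgroup (-c) c a, neg_add_cancel, hid]
      continuous_toFun := hτneg
      continuous_invFun := hτpos }
  have hE : ∀ x : 𝒱, τ (-c) x = E x := fun _ => rfl
  rw [map_add, map_one, hE, E.map_tsum]
  congr 1
  refine tsum_congr fun k => ?_
  show τ (-c) ((Complex.I ^ (k + 1)) • dysonTerm τ W (s + c) (k + 1) (t + c))
      = (Complex.I ^ (k + 1)) • dysonTerm τ W s (k + 1) t
  rw [map_smul, dysonTerm_shift τ hgroup hcont W hW c hWc s (k + 1) t,
    ← hgroup (-c) c, neg_add_cancel, hid]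
end

section
/- Let X be a complex Banach space, G₀ : X → X a continuous linear map, λ₀ ∈ ℂ and 𝔯 > 0 such that every z ∈ ℂ with |z − λ₀| = 𝔯 belongs to the resolvent set of G₀, and set M := sup_{|z−λ₀|=𝔯} ‖(z·1 − G₀)⁻¹‖. Let B : X → X be a continuous linear map with M·‖B‖ < 1. Then for every z with |z − λ₀| = 𝔯 the operator z·1 − G₀ − B is invertible with (z·1 − G₀ − B)⁻¹ = Σ_{n≥0} (z·1 − G₀)⁻¹ (B (z·1 − G₀)⁻¹)ⁿ (absolutely convergent Neumann series), and the Riesz projections P := (1/2πi)∮_{|z−λ₀|=𝔯} (z·1 − G₀ − B)⁻¹ dz and P₀ := (1/2πi)∮_{|z−λ₀|=𝔯} (z·1 − G₀)⁻¹ dz satisfy ‖P − P₀‖ ≤ 𝔯 M² ‖B‖ / (1 − M‖B‖). -/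
/-!
On the circle write `z - G₀ - B = (1 - B R(z)) (z - G₀)` with `R(z) = (z - G₀)⁻¹`. Since
`‖B R(z)‖ ≤ M ‖B‖ < 1`, the geometric series of `B R(z)` inverts the first factor; this gives the
Neumann series and `‖(z - G₀ - B)⁻¹‖ ≤ M / (1 - M ‖B‖)`. The resolvent identity
`(z - G₀ - B)⁻¹ - R(z) = (z - G₀ - B)⁻¹ B R(z)` then bounds the difference of the two resolvents by
`M² ‖B‖ / (1 - M ‖B‖)` uniformly on the circle, and `‖(2πi)⁻¹ ∮ f‖ ≤ 𝔯 sup ‖f‖` concludes.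
Continuity of `R` on the compact circle makes its norms a bounded set, so `M` really bounds
`‖R(z)‖` there (the `sSup` of an unbounded set of reals would be `0`).
-/

open Metric Complex
open scoped Ring Real

theorem sub_eq_one_sub_mul_inverse_mul {R : Type*} [Ring R] {a : R} (ha : IsUnit a) (b : R) :
    a - b = (1 - b * a⁻¹ʳ) * a := by
  rw [sub_mul, one_mul, mul_assoc, Ring.inverse_mul_cancel a ha, mul_one]

section NormedRing

variable {R : Type*} [NormedRing R]

theorem norm_mul_pow_le_mul_norm_pow (x t : R) (n : ℕ) : ‖x * t ^ n‖ ≤ ‖x‖ * ‖t‖ ^ n := by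
  induction n with
  | zero => simp
  | succ n ih =>
    calc ‖x * t ^ (n + 1)‖ = ‖x * t ^ n * t‖ := by rw [pow_succ, mul_assoc]
      _ ≤ ‖x * t ^ n‖ * ‖t‖ := norm_mul_le _ _
      _ ≤ ‖x‖ * ‖t‖ ^ n * ‖t‖ := by gcongr
      _ = ‖x‖ * ‖t‖ ^ (n + 1) := by rw [pow_succ, mul_assoc]

theorem summable_norm_mul_pow (x : R) {t : R} (ht : ‖t‖ < 1) :
    Summable fun n : ℕ => ‖x * t ^ n‖ :=
  .of_nonneg_of_le (fun _ => norm_nonneg _) (norm_mul_pow_le_mul_norm_pow x t)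
    ((summable_geometric_of_lt_one (norm_nonneg t) ht).mul_left ‖x‖)

theorem norm_tsum_mul_pow_le (x : R) {t : R} (ht : ‖t‖ < 1) :
    ‖∑' n : ℕ, x * t ^ n‖ ≤ ‖x‖ / (1 - ‖t‖) :=
  tsum_of_norm_bounded ((hasSum_geometric_of_lt_one (norm_nonneg t) ht).mul_left ‖x‖)
    (norm_mul_pow_le_mul_norm_pow x t)

theorem norm_mul_inverse_le {a b : R} {M : ℝ} (hM : ‖a⁻¹ʳ‖ ≤ M) : ‖b * a⁻¹ʳ‖ ≤ M * ‖b‖ :=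
  calc ‖b * a⁻¹ʳ‖ ≤ ‖b‖ * ‖a⁻¹ʳ‖ := norm_mul_le _ _
    _ ≤ ‖b‖ * M := by gcongr
    _ = M * ‖b‖ := mul_comm _ _

end NormedRing

section Neumann

variable {R : Type*} [NormedRing R] [HasSummableGeomSeries R] {a b : R}

theorem isUnit_sub_of_norm_mul_inverse_lt_one (ha : IsUnit a) (h : ‖b * a⁻¹ʳ‖ < 1) :
    IsUnit (a - b) := by
  rw [sub_eq_one_sub_mul_inverse_mul ha]
  exact (Units.oneSub _ h).isUnit.mul ha

theorem inverse_sub_eq_tsum (ha : IsUnit a) (h : ‖b * a⁻¹ʳ‖ < 1) :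
    (a - b)⁻¹ʳ = ∑' n : ℕ, a⁻¹ʳ * (b * a⁻¹ʳ) ^ n := by
  rw [sub_eq_one_sub_mul_inverse_mul ha, Ring.inverse_mul (.inr ha),
    ← geom_series_eq_inverse _ h, (summable_geometric_of_norm_lt_one h).tsum_mul_left]

theorem norm_inverse_sub_sub_inverse_le (ha : IsUnit a) {M : ℝ} (hM : ‖a⁻¹ʳ‖ ≤ M)
    (hMb : M * ‖b‖ < 1) : ‖(a - b)⁻¹ʳ - a⁻¹ʳ‖ ≤ M ^ 2 * ‖b‖ / (1 - M * ‖b‖) := by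
  have hM0 : 0 ≤ M := (norm_nonneg _).trans hM
  have ht := norm_mul_inverse_le (b := b) hM
  have hab : ‖(a - b)⁻¹ʳ‖ ≤ M / (1 - M * ‖b‖) :=
    calc ‖(a - b)⁻¹ʳ‖ ≤ ‖a⁻¹ʳ‖ / (1 - ‖b * a⁻¹ʳ‖) := by
          rw [inverse_sub_eq_tsum ha (ht.trans_lt hMb)]
          exact norm_tsum_mul_pow_le _ (ht.trans_lt hMb)
      _ ≤ M / (1 - M * ‖b‖) := by gcongr
  have hunit := isUnit_sub_of_norm_mul_inverse_lt_one ha (ht.trans_lt hMb)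
  calc ‖(a - b)⁻¹ʳ - a⁻¹ʳ‖ = ‖(a - b)⁻¹ʳ * b * a⁻¹ʳ‖ := by
        rw [Ring.inverse_sub_inverse (iff_of_true hunit ha), sub_sub_cancel]
    _ ≤ ‖(a - b)⁻¹ʳ‖ * ‖b‖ * ‖a⁻¹ʳ‖ := norm_mul₃_le
    _ ≤ M / (1 - M * ‖b‖) * ‖b‖ * M := by gcongr
    _ = M ^ 2 * ‖b‖ / (1 - M * ‖b‖) := by ring

end Neumann

theorem ContinuousOn.ringInverse {α R : Type*} [TopologicalSpace α] [NormedRing R]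
    [HasSummableGeomSeries R] {f : α → R} {s : Set α} (hf : ContinuousOn f s)
    (hu : ∀ x ∈ s, IsUnit (f x)) : ContinuousOn (fun x => (f x)⁻¹ʳ) s := fun x hx => by
  obtain ⟨u, hux⟩ := hu x hx
  exact (hux ▸ NormedRing.inverse_continuousAt u).comp_continuousWithinAt (hf x hx)

theorem one_div_two_pi_smul_integral_eq_circleIntegral {E : Type*} [NormedAddCommGroup E]
    [NormedSpace ℂ E] (F : ℂ → E) (c : ℂ) (R : ℝ) :
    (1 / (2 * π)) • ∫ θ in (0 : ℝ)..(2 * π), ((R : ℂ) * exp (θ * I)) • F (c + R * exp (θ * I))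
      = (2 * π * I)⁻¹ • ∮ z in C(c, R), F z := by
  have hI : ∀ θ : ℝ, deriv (circleMap c R) θ • F (circleMap c R θ)
      = I • (((R : ℂ) * exp (θ * I)) • F (c + R * exp (θ * I))) := fun θ => by
    rw [deriv_circleMap, mul_comm, mul_smul, circleMap, circleMap, zero_add]
  simp only [circleIntegral, hI]
  rw [intervalIntegral.integral_smul, smul_smul]
  match_scalars
  field_simp
  simp

/-- **Neumann series and perturbation of Riesz projections.**  Let `X` be a complex
Banach space, `G₀` a bounded operator on `X`, `l₀ ∈ ℂ` and `𝔯 > 0` such that the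
circle `|z − l₀| = 𝔯` lies in the resolvent set of `G₀`, and let
`M := sup_{|z−l₀|=𝔯} ‖(z·1 − G₀)⁻¹‖`.  If `B` is a bounded operator with
`M·‖B‖ < 1`, then for each `z` on the circle the operator `z·1 − G₀ − B` is
invertible, with inverse given by the absolutely convergent Neumann series
`Σ_{n≥0} (z·1 − G₀)⁻¹ (B (z·1 − G₀)⁻¹)ⁿ`, and the Riesz projections
`P := (1/2πi)∮(z·1 − G₀ − B)⁻¹dz` and `P₀ := (1/2πi)∮(z·1 − G₀)⁻¹dz` satisfy
`‖P − P₀‖ ≤ 𝔯 M² ‖B‖ / (1 − M‖B‖)`. -/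
theorem riesz_projection_perturbation
    {X : Type*} [NormedAddCommGroup X] [NormedSpace ℂ X] [CompleteSpace X]
    (G₀ B : X →L[ℂ] X) (l₀ : ℂ) (𝔯 : ℝ) (h𝔯 : 0 < 𝔯)
    (hres : ∀ z : ℂ, ‖z - l₀‖ = 𝔯 → IsUnit (z • (1 : X →L[ℂ] X) - G₀))
    (M : ℝ)
    (hM : M = sSup ((fun z : ℂ => ‖Ring.inverse (z • (1 : X →L[ℂ] X) - G₀)‖) ''
      Metric.sphere l₀ 𝔯))
    (hB : M * ‖B‖ < 1) :
    (∀ z : ℂ, ‖z - l₀‖ = 𝔯 →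
      IsUnit (z • (1 : X →L[ℂ] X) - G₀ - B) ∧
      Summable (fun n : ℕ =>
        ‖Ring.inverse (z • (1 : X →L[ℂ] X) - G₀) ∘L
          (B ∘L Ring.inverse (z • (1 : X →L[ℂ] X) - G₀)) ^ n‖) ∧
      Ring.inverse (z • (1 : X →L[ℂ] X) - G₀ - B)
        = ∑' n : ℕ, Ring.inverse (z • (1 : X →L[ℂ] X) - G₀) ∘L
            (B ∘L Ring.inverse (z • (1 : X →L[ℂ] X) - G₀)) ^ n) ∧
    ‖((1 / (2 * Real.pi)) • ∫ θ in (0 : ℝ)..(2 * Real.pi),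
        ((𝔯 : ℂ) * Complex.exp (θ * Complex.I)) •
          Ring.inverse
            ((l₀ + (𝔯 : ℂ) * Complex.exp (θ * Complex.I)) • (1 : X →L[ℂ] X) - G₀ - B))
      - ((1 / (2 * Real.pi)) • ∫ θ in (0 : ℝ)..(2 * Real.pi),
        ((𝔯 : ℂ) * Complex.exp (θ * Complex.I)) •
          Ring.inverse
            ((l₀ + (𝔯 : ℂ) * Complex.exp (θ * Complex.I)) • (1 : X →L[ℂ] X) - G₀))‖
      ≤ 𝔯 * M ^ 2 * ‖B‖ / (1 - M * ‖B‖) := by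
  have hres' : ∀ z ∈ sphere l₀ 𝔯, IsUnit (z • (1 : X →L[ℂ] X) - G₀) := fun z hz =>
    hres z (mem_sphere_iff_norm.1 hz)
  have hR₀ : ContinuousOn (fun z : ℂ => (z • (1 : X →L[ℂ] X) - G₀)⁻¹ʳ) (sphere l₀ 𝔯) :=
    ContinuousOn.ringInverse (by fun_prop) hres'
  have hMle : ∀ z ∈ sphere l₀ 𝔯, ‖(z • (1 : X →L[ℂ] X) - G₀)⁻¹ʳ‖ ≤ M := fun z hz =>
    hM ▸ le_csSup ((isCompact_sphere l₀ 𝔯).image_of_continuousOn hR₀.norm).bddAbove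
      (Set.mem_image_of_mem _ hz)
  have hsmall : ∀ z ∈ sphere l₀ 𝔯, ‖B * (z • (1 : X →L[ℂ] X) - G₀)⁻¹ʳ‖ < 1 := fun z hz =>
    (norm_mul_inverse_le (hMle z hz)).trans_lt hB
  have hR : ContinuousOn (fun z : ℂ => (z • (1 : X →L[ℂ] X) - G₀ - B)⁻¹ʳ) (sphere l₀ 𝔯) :=
    ContinuousOn.ringInverse (by fun_prop) fun z hz =>
      isUnit_sub_of_norm_mul_inverse_lt_one (hres' z hz) (hsmall z hz)
  refine ⟨fun z hz => ?_, ?_⟩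
  · rw [← mem_sphere_iff_norm] at hz
    exact ⟨isUnit_sub_of_norm_mul_inverse_lt_one (hres' z hz) (hsmall z hz),
      summable_norm_mul_pow _ (hsmall z hz), inverse_sub_eq_tsum (hres' z hz) (hsmall z hz)⟩
  rw [one_div_two_pi_smul_integral_eq_circleIntegral fun z => (z • (1 : X →L[ℂ] X) - G₀ - B)⁻¹ʳ,
    one_div_two_pi_smul_integral_eq_circleIntegral fun z => (z • (1 : X →L[ℂ] X) - G₀)⁻¹ʳ,
    ← smul_sub, ← circleIntegral.integral_sub (hR.circleIntegrable h𝔯.le)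
      (hR₀.circleIntegrable h𝔯.le)]
  refine (circleIntegral.norm_two_pi_i_inv_smul_integral_le_of_norm_le_const h𝔯.le fun z hz =>
    norm_inverse_sub_sub_inverse_le (hres' z hz) (hMle z hz) hB).trans_eq ?_
  ring
end

section
/- Let β, c > 0 and let p ≥ 1 be a natural number. Define G(z) := z^{2p} · e^{−c z²} · (1 + e^{−βz})^{−1/2}, where the power −1/2 is taken with the principal branch of the square root. Then 1 + e^{−βz} has strictly positive real part on the strip S := {z ∈ ℂ : |Im z| < π/(2β)} (so G is well defined there), G is holomorphic on S, and for every r with 0 < r < π/(2β) one has sup_{y∈[−r,r]} ∫_ℝ |G(x+iy)|² dx < ∞. -/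
/-!
On the closed strip `|Im z| ≤ π/(2β)` one has
`Re (1 + e^{-βz}) = 1 + e^{-β Re z} cos (β Im z) ≥ 1`, so the principal power
`(1 + e^{-βz})^{-1/2}` is holomorphic there and has modulus at most `1`. The remaining factor is
controlled by `t^m ≤ m! e^t` at `t = c|z|²`, which gives
`|z^m e^{-cz²}|² ≤ (m!/c^m) e^{3c y²} e^{-c x²}` for `z = x + iy`: a Gaussian in `x`, uniformly
for `|y| ≤ r`.
-/

open Complex Real MeasureTheory
open scoped Nat

lemma re_one_add_cexp_neg_mul (β : ℝ) (z : ℂ) :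
    (1 + cexp (-β * z)).re = 1 + rexp (-(β * z.re)) * Real.cos (β * z.im) := by
  simp [Complex.exp_re, Complex.mul_re, Complex.mul_im]

lemma one_le_re_one_add_cexp_neg_mul {β : ℝ} {z : ℂ} (h : |β * z.im| ≤ π / 2) :
    1 ≤ (1 + cexp (-β * z)).re := by
  rw [re_one_add_cexp_neg_mul]
  have hcos := Real.cos_nonneg_of_neg_pi_div_two_le_of_le (abs_le.mp h).1 (abs_le.mp h).2
  have := mul_nonneg (exp_pos (-(β * z.re))).le hcos
  linarith

lemma abs_mul_le_pi_div_two {β y : ℝ} (hβ : 0 < β) (hy : |y| ≤ π / (2 * β)) :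
    |β * y| ≤ π / 2 := by
  rwa [abs_mul, abs_of_pos hβ, ← le_div_iff₀' hβ, div_div]

lemma norm_mul_cpow_neg_half_le (a : ℂ) {w : ℂ} (hw : 1 ≤ ‖w‖) :
    ‖a * w ^ (-(1 / 2) : ℂ)‖ ≤ ‖a‖ := by
  have hroot : ‖w ^ (-(1 / 2) : ℂ)‖ ≤ 1 := by
    have h := norm_cpow_real w (-(1 / 2))
    push_cast at h
    rw [h]
    exact Real.rpow_le_one_of_one_le_of_nonpos hw (by norm_num)
  rw [norm_mul]
  exact mul_le_of_le_one_right (norm_nonneg a) hroot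

lemma pow_le_factorial_mul_exp {t : ℝ} (ht : 0 ≤ t) (n : ℕ) : t ^ n ≤ n ! * rexp t := by
  have := Real.pow_div_factorial_le_exp t ht n
  rwa [div_le_iff₀' (by positivity)] at this

lemma sq_norm_pow_mul_cexp_neg_mul_sq_le {c : ℝ} (hc : 0 < c) (m : ℕ) (z : ℂ) :
    ‖z ^ m * cexp (-c * z ^ 2)‖ ^ 2 ≤
      m ! / c ^ m * rexp (3 * c * z.im ^ 2) * rexp (-c * z.re ^ 2) := by
  have hnorm : ‖z‖ ^ 2 = z.re ^ 2 + z.im ^ 2 := by rw [Complex.sq_norm, normSq_apply]; ring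
  have hpoly : (‖z‖ ^ 2) ^ m ≤ m ! / c ^ m * rexp (c * ‖z‖ ^ 2) := by
    rw [div_mul_eq_mul_div, le_div_iff₀' (by positivity), ← mul_pow]
    exact pow_le_factorial_mul_exp (by positivity) m
  have hre : (-c * z ^ 2 : ℂ).re = -c * (z.re ^ 2 - z.im ^ 2) := by
    simp [sq, Complex.mul_re]
  calc ‖z ^ m * cexp (-c * z ^ 2)‖ ^ 2
      = (‖z‖ ^ 2) ^ m * rexp (-c * (z.re ^ 2 - z.im ^ 2)) ^ 2 := by
        rw [norm_mul, norm_pow, Complex.norm_exp, hre, mul_pow, ← pow_mul, ← pow_mul, mul_comm 2]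
    _ ≤ m ! / c ^ m * rexp (c * ‖z‖ ^ 2) * rexp (-c * (z.re ^ 2 - z.im ^ 2)) ^ 2 := by gcongr
    _ = m ! / c ^ m * rexp (3 * c * z.im ^ 2) * rexp (-c * z.re ^ 2) := by
        rw [mul_assoc, mul_assoc, ← Real.exp_nat_mul, ← Real.exp_add, ← Real.exp_add, hnorm]
        ring_nf

open Complex in
theorem form_factor_strip_analyticity_general
    (β c : ℝ) (hβ : 0 < β) (hc : 0 < c) (p : ℕ)
    (G : ℂ → ℂ)
    (hG : ∀ z : ℂ, G z = z ^ (2 * p) * Complex.exp (-(c : ℂ) * z ^ 2) *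
        (1 + Complex.exp (-(β : ℂ) * z)) ^ (-(1 / 2) : ℂ)) :
    (∀ z : ℂ, |z.im| < Real.pi / (2 * β) → 0 < (1 + Complex.exp (-(β : ℂ) * z)).re) ∧
    DifferentiableOn ℂ G {z : ℂ | |z.im| < Real.pi / (2 * β)} ∧
    ∀ r : ℝ, 0 < r → r < Real.pi / (2 * β) →
      (⨆ y ∈ Set.Icc (-r) r,
        ∫⁻ x : ℝ, (‖G ((x : ℂ) + (y : ℂ) * Complex.I)‖₊ : ENNReal) ^ 2) < ⊤ := by
  have hre : ∀ z : ℂ, |z.im| ≤ π / (2 * β) → 1 ≤ (1 + cexp (-β * z)).re :=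
    fun z hz => one_le_re_one_add_cexp_neg_mul (abs_mul_le_pi_div_two hβ hz)
  have hG_le : ∀ z : ℂ, |z.im| ≤ π / (2 * β) →
      ‖G z‖ ^ 2 ≤ (2 * p)! / c ^ (2 * p) * rexp (3 * c * z.im ^ 2) * rexp (-c * z.re ^ 2) := by
    intro z hz
    rw [hG]
    refine le_trans ?_ (sq_norm_pow_mul_cexp_neg_mul_sq_le hc (2 * p) z)
    gcongr
    exact norm_mul_cpow_neg_half_le _ ((hre z hz).trans (re_le_norm _))
  refine ⟨fun z hz => one_pos.trans_le (hre z hz.le), ?_, ?_⟩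
  · intro z hz
    have hslit : 1 + cexp (-β * z) ∈ slitPlane := Or.inl (one_pos.trans_le (hre z (le_of_lt hz)))
    rw [funext hG]
    refine DifferentiableAt.differentiableWithinAt (.mul (by fun_prop) ?_)
    exact DifferentiableAt.cpow (by fun_prop) (by fun_prop) hslit
  · intro r _ hrπ
    have hint : Integrable fun x : ℝ =>
        (2 * p)! / c ^ (2 * p) * rexp (3 * c * r ^ 2) * rexp (-c * x ^ 2) :=
      (integrable_exp_neg_mul_sq hc).const_mul _
    refine lt_of_le_of_lt (iSup₂_le fun y hy => lintegral_mono fun x => ?_) hint.lintegral_lt_top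
    have hz := hG_le (x + y * I) (by simpa using (abs_le.mpr hy).trans hrπ.le)
    simp only [add_re, add_im, ofReal_re, ofReal_im, mul_I_re, mul_I_im, neg_zero, add_zero,
      zero_add] at hz
    have hy2 : y ^ 2 ≤ r ^ 2 := sq_le_sq' hy.1 hy.2
    rw [← enorm_eq_nnnorm, ← ofReal_norm, ← ENNReal.ofReal_pow (norm_nonneg _)]
    exact ENNReal.ofReal_le_ofReal (hz.trans (by gcongr))

open Complex in
/-- **Analyticity and square-integrability of the glued form factor on a strip.**
Let `β, c > 0` and `p ≥ 1` a natural number, and let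
`G(z) := z^{2p} e^{−cz²} (1 + e^{−βz})^{−1/2}` (principal branch of the square root).
Then `1 + e^{−βz}` has strictly positive real part on the strip
`S = {z : |Im z| < π/(2β)}`, `G` is holomorphic on `S`, and for every
`0 < r < π/(2β)` one has `sup_{y∈[−r,r]} ∫_ℝ |G(x+iy)|² dx < ∞`. -/
theorem form_factor_strip_analyticity
    (β c : ℝ) (hβ : 0 < β) (hc : 0 < c) (p : ℕ) (hp : 1 ≤ p)
    (G : ℂ → ℂ)
    (hG : ∀ z : ℂ, G z = z ^ (2 * p) * Complex.exp (-(c : ℂ) * z ^ 2) *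
        (1 + Complex.exp (-(β : ℂ) * z)) ^ (-(1 / 2) : ℂ)) :
    (∀ z : ℂ, |z.im| < Real.pi / (2 * β) → 0 < (1 + Complex.exp (-(β : ℂ) * z)).re) ∧
    DifferentiableOn ℂ G {z : ℂ | |z.im| < Real.pi / (2 * β)} ∧
    ∀ r : ℝ, 0 < r → r < Real.pi / (2 * β) →
      (⨆ y ∈ Set.Icc (-r) r,
        ∫⁻ x : ℝ, (‖G ((x : ℂ) + (y : ℂ) * Complex.I)‖₊ : ENNReal) ^ 2) < ⊤ :=
  form_factor_strip_analyticity_general β c hβ hc p G hG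
end
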